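/- Symmetry of gluing conditions. Let ν ∈ ℂ and let f ∈ F_η. Then the following two conditions are equivalent: (1) the function z ↦ f(z) - z^{-2ν-1} η(S) f(-1/z), defined and holomorphic on ℂ∖ℝ, extends to a holomorphic function on ℂ∖(-∞,0]; (2) there exist an open neighborhood U of ℝ∖{0} in ℂ and a holomorphic function q : U → V such that (1+z^{-2})^{ν+1/2} f(-1/z) - (1+z²)^{ν+1/2} η(S) f(z) = q(z) for all z ∈ U∖ℝ (i.e. the two functions z ↦ (1+z^{-2})^{ν+1/2} f(-1/z) and z ↦ (1+z²)^{ν+1/2} η(S) f(z) define the same hyperfunction on ℝ∖{0}). -/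

import Mathlib

/-!
Write `s = ν + 1/2`, `h(z) = f(z) - z^{-2s} S f(-1/z)` and
`k(z) = (1+z^{-2})^s f(-1/z) - (1+z²)^s S f(z)`, where `S` now stands for `η(S)`, an
involution because `η(-I) = 1`. On the right half plane the principal branches satisfy
`(1+z^{-2})^s = (1+z²)^s z^{-2s}`, which gives `k(z) = -(1+z²)^s S h(z)`; on the left half plane
the same identity at `-z` gives `k(z) = (1+z^{-2})^s h(-1/z)`. Hence `k` continues holomorphically
across the positive reals iff `h` does, and across the negative reals iff `h` does across the
positive reals (via `z ↦ -1/z`). Since `h` is holomorphic off `ℝ`, either condition says exactly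
that `h` continues across `(0, ∞)`.
-/

open Complex Filter Topology MeasureTheory Set

noncomputable section

abbrev SL2Z := Matrix.SpecialLinearGroup (Fin 2) ℤ

def Smat : SL2Z := ⟨!![0, 1; -1, 0], by decide⟩
def Tmat : SL2Z := ⟨!![1, 1; 0, 1], by decide⟩
def negI : SL2Z := ⟨!![-1, 0; 0, -1], by decide⟩

variable {V : Type} [NormedAddCommGroup V] [NormedSpace ℂ V]

/-- The space `F_η`. -/
structure MemFeta (η : SL2Z →* (V →ₗ[ℂ] V)ˣ) (f : ℂ → V) : Prop where
  holo : DifferentiableOn ℂ f {z : ℂ | z.im ≠ 0}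
  periodic : ∀ z : ℂ, z.im ≠ 0 → f (z + 1) = (η Tmat : V →ₗ[ℂ] V) (f z)
  bounded : ∃ C : ℝ, ∀ z : ℂ, 1 ≤ |z.im| → ‖f z‖ ≤ C
  limits : ∃ a b : V, Tendsto (fun t : ℝ => f ((t : ℂ) * I)) atTop (𝓝 a) ∧
    Tendsto (fun t : ℝ => f (-((t : ℂ) * I))) atTop (𝓝 b) ∧ a + b = 0

lemma one_add_sq_mem_slitPlane {z : ℂ} (hz : z.re ≠ 0) : 1 + z ^ 2 ∈ slitPlane := by
  rw [mem_slitPlane_iff]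
  rcases eq_or_ne z.im 0 with h | h
  · left
    simp only [add_re, one_re, pow_two, mul_re, h, mul_zero, sub_zero]
    nlinarith [mul_self_nonneg z.re]
  · right
    have him : (1 + z ^ 2).im = 2 * z.re * z.im := by simp [pow_two, mul_im]; ring
    rw [him]
    exact mul_ne_zero (mul_ne_zero two_ne_zero hz) h

lemma one_add_inv_sq_mem_slitPlane {z : ℂ} (hz : z.re ≠ 0) : 1 + (z ^ 2)⁻¹ ∈ slitPlane := by
  have hz0 : z ≠ 0 := fun h => hz (by simp [h])
  rw [← inv_pow]
  refine one_add_sq_mem_slitPlane ?_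
  rw [inv_re]
  exact div_ne_zero hz (normSq_pos.2 hz0).ne'

lemma neg_inv_im_ne_zero {z : ℂ} (hz : z.im ≠ 0) : (-z⁻¹).im ≠ 0 := by
  have hz0 : z ≠ 0 := fun h => hz (by simp [h])
  rw [neg_im, inv_im, neg_div, neg_neg]
  exact div_ne_zero hz (normSq_pos.2 hz0).ne'

lemma neg_inv_re_pos {z : ℂ} (hz : z.re < 0) : 0 < (-z⁻¹).re := by
  have hz0 : z ≠ 0 := fun h => hz.ne (by simp [h])
  rw [neg_re, inv_re, ← neg_div]
  exact div_pos (neg_pos.2 hz) (normSq_pos.2 hz0)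

/-- The branch identity behind `1 + z⁻² = (1 + z²) / z²`: on the right half plane
`arg (1 + z²)` and `arg z` have the same sign and `|arg z| < π / 2`, so no multiple of `2πi`
appears. -/
lemma log_one_add_inv_sq {z : ℂ} (hz : 0 < z.re) :
    log (1 + (z ^ 2)⁻¹) = log (1 + z ^ 2) - 2 * log z := by
  have hz0 : z ≠ 0 := fun h => hz.ne (by simp [h])
  have hexp : exp (log (1 + z ^ 2) - 2 * log z) = 1 + (z ^ 2)⁻¹ := by
    rw [exp_sub, exp_log (slitPlane_ne_zero (one_add_sq_mem_slitPlane hz.ne')), two_mul,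
      exp_add, exp_log hz0]
    field_simp
    ring
  have him : (log (1 + z ^ 2) - 2 * log z).im = arg (1 + z ^ 2) - 2 * arg z := by
    simp [log_im]
  have hz_arg : |arg z| < Real.pi / 2 := abs_arg_lt_pi_div_two_iff.2 (Or.inl hz)
  have hsign : 0 ≤ arg z ↔ 0 ≤ arg (1 + z ^ 2) := by
    have : (1 + z ^ 2).im = 2 * z.re * z.im := by simp [pow_two, mul_im]; ring
    rw [arg_nonneg_iff, arg_nonneg_iff, this]
    constructor <;> intro h <;> nlinarith
  have hbounds :
      -Real.pi < arg (1 + z ^ 2) - 2 * arg z ∧ arg (1 + z ^ 2) - 2 * arg z ≤ Real.pi := by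
    have hlo := neg_pi_lt_arg (1 + z ^ 2)
    have hhi := arg_le_pi (1 + z ^ 2)
    obtain ⟨hz_lo, hz_hi⟩ := abs_lt.1 hz_arg
    rcases le_or_gt 0 (arg z) with h | h
    · have := hsign.1 h
      constructor <;> linarith
    · have : arg (1 + z ^ 2) < 0 := lt_of_not_ge (mt hsign.2 h.not_ge)
      constructor <;> linarith
  rw [← hexp, log_exp (him ▸ hbounds.1) (him ▸ hbounds.2)]

lemma one_add_inv_sq_cpow {z : ℂ} (hz : 0 < z.re) (s : ℂ) :
    (1 + (z ^ 2)⁻¹) ^ s = (1 + z ^ 2) ^ s * z ^ (-2 * s) := by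
  have hz0 : z ≠ 0 := fun h => hz.ne (by simp [h])
  rw [cpow_def_of_ne_zero (slitPlane_ne_zero (one_add_inv_sq_mem_slitPlane hz.ne')),
    cpow_def_of_ne_zero (slitPlane_ne_zero (one_add_sq_mem_slitPlane hz.ne')),
    cpow_def_of_ne_zero hz0, ← exp_add, log_one_add_inv_sq hz]
  ring_nf

lemma one_add_inv_sq_cpow_mul_neg_inv_cpow {z : ℂ} (hz : z.re < 0) (s : ℂ) :
    (1 + (z ^ 2)⁻¹) ^ s * (-z⁻¹) ^ (-2 * s) = (1 + z ^ 2) ^ s := by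
  have hnz : 0 < (-z).re := by simpa using hz
  have hnz_slit : -z ∈ slitPlane := Or.inl hnz
  have hnz_cpow : (-z) ^ (-2 * s) ≠ 0 := cpow_ne_zero_iff.2 (Or.inl (slitPlane_ne_zero hnz_slit))
  rw [← neg_sq, one_add_inv_sq_cpow hnz, ← inv_neg, inv_cpow _ _ (mem_slitPlane_iff_arg.1
    hnz_slit).1, mul_assoc, mul_inv_cancel₀ hnz_cpow, mul_one]

section Gluing

variable (S : V →L[ℂ] V) (s : ℂ) (f : ℂ → V)

/-- The function of condition (1), with `s = ν + 1/2`. -/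
def gluingDefect (z : ℂ) : V := f z - z ^ (-2 * s) • S (f (-z⁻¹))

/-- The function of condition (2) whose boundary values form the hyperfunction difference. -/
def hyperfunctionDefect (z : ℂ) : V :=
  (1 + (z ^ 2)⁻¹) ^ s • f (-z⁻¹) - (1 + z ^ 2) ^ s • S (f z)

variable {S s f}

lemma hyperfunctionDefect_eq_of_re_pos (hS : ∀ v, S (S v) = v) {z : ℂ} (hz : 0 < z.re) :
    hyperfunctionDefect S s f z = -((1 + z ^ 2) ^ s • S (gluingDefect S s f z)) := by
  simp only [hyperfunctionDefect, gluingDefect, map_sub, map_smul, hS,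
    one_add_inv_sq_cpow hz, mul_smul]
  rw [smul_sub, neg_sub]

lemma hyperfunctionDefect_eq_of_re_neg {z : ℂ} (hz : z.re < 0) :
    hyperfunctionDefect S s f z = (1 + (z ^ 2)⁻¹) ^ s • gluingDefect S s f (-z⁻¹) := by
  rw [hyperfunctionDefect, gluingDefect, inv_neg, inv_inv, neg_neg, smul_sub, smul_smul,
    one_add_inv_sq_cpow_mul_neg_inv_cpow hz]

lemma gluingDefect_eq_of_re_pos (hS : ∀ v, S (S v) = v) {z : ℂ} (hz : 0 < z.re) :
    gluingDefect S s f z = -((1 + z ^ 2) ^ (-s) • S (hyperfunctionDefect S s f z)) := by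
  have hB : (1 + z ^ 2) ^ s ≠ 0 :=
    cpow_ne_zero_iff.2 (Or.inl (slitPlane_ne_zero (one_add_sq_mem_slitPlane hz.ne')))
  rw [hyperfunctionDefect_eq_of_re_pos hS hz, map_neg, map_smul, hS, smul_neg, neg_neg,
    smul_smul, cpow_neg, inv_mul_cancel₀ hB, one_smul]

lemma differentiableOn_one_add_sq_cpow :
    DifferentiableOn ℂ (fun z : ℂ => (1 + z ^ 2) ^ s) {z | z.re ≠ 0} :=
  DifferentiableOn.cpow (by fun_prop) (differentiableOn_const s)
    fun _ hz => one_add_sq_mem_slitPlane hz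

lemma differentiableOn_one_add_inv_sq_cpow :
    DifferentiableOn ℂ (fun z : ℂ => (1 + (z ^ 2)⁻¹) ^ s) {z | z.re ≠ 0} := by
  refine DifferentiableOn.cpow ?_ (differentiableOn_const s)
    fun _ hz => one_add_inv_sq_mem_slitPlane hz
  refine ((differentiableOn_id.pow 2).inv fun z hz => pow_ne_zero 2 ?_).const_add 1
  exact fun h => hz (by simp [h])

lemma DifferentiableOn.comp_neg_inv {g : ℂ → V} {t u : Set ℂ} (hg : DifferentiableOn ℂ g u)
    (ht : ∀ z ∈ t, z ≠ 0) (htu : MapsTo (fun z => -z⁻¹) t u) :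
    DifferentiableOn ℂ (fun z => g (-z⁻¹)) t :=
  hg.comp (differentiableOn_id.inv ht).neg htu

lemma differentiableOn_gluingDefect (hf : DifferentiableOn ℂ f {z | z.im ≠ 0}) :
    DifferentiableOn ℂ (gluingDefect S s f) {z | z.im ≠ 0} := by
  have h0 : ∀ z ∈ {z : ℂ | z.im ≠ 0}, z ≠ 0 := fun z hz h => hz (by simp [h])
  refine hf.sub (DifferentiableOn.smul ?_ (S.differentiable.comp_differentiableOn
    (hf.comp_neg_inv h0 fun _ => neg_inv_im_ne_zero)))
  exact DifferentiableOn.cpow differentiableOn_id (differentiableOn_const _)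
    fun z hz => Or.inr hz

lemma exists_hyperfunctionDefect_eq_of_gluingDefect (hS : ∀ v, S (S v) = v) {g : ℂ → V}
    (hg : DifferentiableOn ℂ g slitPlane) (hgf : ∀ z : ℂ, z.im ≠ 0 → g z = gluingDefect S s f z) :
    ∃ U : Set ℂ, IsOpen U ∧ {z : ℂ | z.im = 0 ∧ z ≠ 0} ⊆ U ∧
      ∃ q : ℂ → V, DifferentiableOn ℂ q U ∧
        ∀ z ∈ U, z.im ≠ 0 → hyperfunctionDefect S s f z = q z := by
  set q : ℂ → V := fun z =>
    if 0 < z.re then -((1 + z ^ 2) ^ s • S (g z)) else (1 + (z ^ 2)⁻¹) ^ s • g (-z⁻¹)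
  have hU : {z : ℂ | z.re ≠ 0} = {z | z.re < 0} ∪ {z | 0 < z.re} := by
    ext z; exact ne_iff_lt_or_gt
  have hpos : DifferentiableOn ℂ q {z | 0 < z.re} := by
    refine DifferentiableOn.congr ?_ fun z hz => if_pos hz
    exact ((differentiableOn_one_add_sq_cpow.mono fun z hz => ne_of_gt hz).smul
      (S.differentiable.comp_differentiableOn (hg.mono fun z hz => Or.inl hz))).neg
  have hneg : DifferentiableOn ℂ q {z | z.re < 0} := by
    refine DifferentiableOn.congr ?_ fun z hz => if_neg (not_lt.2 (le_of_lt hz))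
    exact (differentiableOn_one_add_inv_sq_cpow.mono fun z hz => ne_of_lt hz).smul
      (hg.comp_neg_inv (fun z (hz : z.re < 0) h => hz.ne (by simp [h]))
        fun _ hz => Or.inl (neg_inv_re_pos hz))
  refine ⟨{z | z.re ≠ 0}, isOpen_ne_fun continuous_re continuous_const,
    fun z hz h => hz.2 (ext h hz.1), q, ?_, ?_⟩
  · rw [hU]
    exact hneg.union_of_isOpen hpos (isOpen_lt continuous_re continuous_const)
      (isOpen_lt continuous_const continuous_re)
  · intro z hz him
    rcases lt_or_gt_of_ne hz with hz | hz
    · rw [hyperfunctionDefect_eq_of_re_neg hz, ← hgf _ (neg_inv_im_ne_zero him)]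
      exact (if_neg (not_lt.2 hz.le)).symm
    · rw [hyperfunctionDefect_eq_of_re_pos hS hz, ← hgf z him]
      exact (if_pos hz).symm

lemma exists_gluingDefect_eq_of_hyperfunctionDefect (hS : ∀ v, S (S v) = v)
    (hf : DifferentiableOn ℂ f {z | z.im ≠ 0}) {U : Set ℂ} (hU : IsOpen U)
    (hUR : {z : ℂ | z.im = 0 ∧ z ≠ 0} ⊆ U) {q : ℂ → V} (hq : DifferentiableOn ℂ q U)
    (hqf : ∀ z ∈ U, z.im ≠ 0 → hyperfunctionDefect S s f z = q z) :
    ∃ g : ℂ → V, DifferentiableOn ℂ g slitPlane ∧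
      ∀ z : ℂ, z.im ≠ 0 → g z = gluingDefect S s f z := by
  set g : ℂ → V := fun z =>
    if z.im ≠ 0 then gluingDefect S s f z else -((1 + z ^ 2) ^ (-s) • S (q z))
  have him : DifferentiableOn ℂ g {z | z.im ≠ 0} :=
    (differentiableOn_gluingDefect hf).congr fun z hz => if_pos hz
  have hpos : DifferentiableOn ℂ g (U ∩ {z | 0 < z.re}) := by
    refine DifferentiableOn.congr (f := fun z => -((1 + z ^ 2) ^ (-s) • S (q z))) ?_
      fun z hz => ?_
    · exact ((differentiableOn_one_add_sq_cpow.mono fun z hz => ne_of_gt hz.2).smul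
        (S.differentiable.comp_differentiableOn (hq.mono inter_subset_left))).neg
    · by_cases hz0 : z.im ≠ 0
      · rw [← hqf z hz.1 hz0]
        exact (if_pos hz0).trans (gluingDefect_eq_of_re_pos hS hz.2)
      · exact if_neg hz0
  refine ⟨g, DifferentiableOn.mono (him.union_of_isOpen hpos
    (isOpen_ne_fun continuous_im continuous_const)
    (hU.inter (isOpen_lt continuous_const continuous_re))) fun z hz => ?_, fun z hz => if_pos hz⟩
  by_cases hz0 : z.im = 0
  · have hre : 0 < z.re := (mem_slitPlane_iff.1 hz).resolve_right (not_not.2 hz0)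
    exact Or.inr ⟨hUR ⟨hz0, slitPlane_ne_zero hz⟩, hre⟩
  · exact Or.inl hz0

lemma exists_gluingDefect_iff_exists_hyperfunctionDefect (hS : ∀ v, S (S v) = v)
    (hf : DifferentiableOn ℂ f {z | z.im ≠ 0}) :
    (∃ g : ℂ → V, DifferentiableOn ℂ g slitPlane ∧
      ∀ z : ℂ, z.im ≠ 0 → g z = gluingDefect S s f z) ↔
    (∃ U : Set ℂ, IsOpen U ∧ {z : ℂ | z.im = 0 ∧ z ≠ 0} ⊆ U ∧
      ∃ q : ℂ → V, DifferentiableOn ℂ q U ∧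
        ∀ z ∈ U, z.im ≠ 0 → hyperfunctionDefect S s f z = q z) :=
  ⟨fun ⟨_, hg, hgf⟩ => exists_hyperfunctionDefect_eq_of_gluingDefect hS hg hgf,
    fun ⟨_, hU, hUR, _, hq, hqf⟩ =>
      exists_gluingDefect_eq_of_hyperfunctionDefect hS hf hU hUR hq hqf⟩

end Gluing

lemma Smat_mul_Smat : Smat * Smat = negI := Subtype.ext (by decide)

theorem gluing_symmetry [FiniteDimensional ℂ V]
    (η : SL2Z →* (V →ₗ[ℂ] V)ˣ) (hη1 : η negI = 1)
    (ν : ℂ) (f : ℂ → V) (hf : MemFeta η f) :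
    (∃ g : ℂ → V, DifferentiableOn ℂ g Complex.slitPlane ∧
      ∀ z : ℂ, z.im ≠ 0 →
        g z = f z - (z ^ (-2 * ν - 1)) • (η Smat : V →ₗ[ℂ] V) (f (-z⁻¹))) ↔
    (∃ U : Set ℂ, IsOpen U ∧ {z : ℂ | z.im = 0 ∧ z ≠ 0} ⊆ U ∧
      ∃ q : ℂ → V, DifferentiableOn ℂ q U ∧
        ∀ z ∈ U, z.im ≠ 0 →
          ((1 + (z ^ 2)⁻¹) ^ (ν + 1 / 2)) • f (-z⁻¹)
            - ((1 + z ^ 2) ^ (ν + 1 / 2)) • (η Smat : V →ₗ[ℂ] V) (f z) = q z) := by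
  have hS : ∀ v, (η Smat : V →ₗ[ℂ] V) ((η Smat : V →ₗ[ℂ] V) v) = v := fun v => by
    change ((η Smat * η Smat : (V →ₗ[ℂ] V)ˣ) : V →ₗ[ℂ] V) v = v
    rw [← map_mul, Smat_mul_Smat, hη1]
    rfl
  rw [show -2 * ν - 1 = -2 * (ν + 1 / 2) by ring]
  exact exists_gluingDefect_iff_exists_hyperfunctionDefect
    (S := LinearMap.toContinuousLinearMap (η Smat : V →ₗ[ℂ] V)) hS hf.holo

end
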